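/- arXiv:2010.11047 — 5 statements merged into one kernel-verified Lean document; each statement's English description precedes it below -/
import Mathlib

section
/- Let (p_t)_{t∈[0,1]} be a continuous family of nonzero real Laurent polynomials in z, none of which has a root on the unit circle. Define A_t := (s − 1 − d) + 2p + r_− − r_+, where d is the top degree of p_t, s ∈ {±1} is the sign of its leading coefficient, r_+ is the number of real roots z > 1 counted with multiplicity, r_− the number of real roots z < −1 counted with multiplicity, and p the number of pairs of complex-conjugate (non-real) roots of modulus > 1 counted with multiplicity. Then A_t mod 4 is independent of t. -/
/-!
Let `q = z^N p` and let `I` be the number of its roots in the open unit disk. Since `q` has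
real coefficients and no roots on the unit circle, counting roots gives
`d + N = I + r₊ + r₋ + 2p`, so `A ≡ s - 2 r₊ - I + N - 1`. Writing `q(1) = lc(q) ∏ (1 - r)`,
the conjugate pairs of non-real roots contribute `|1 - r|² > 0` and the real roots contribute
the sign `(-1)^r₊`, so `sign p(1) = s (-1)^r₊ ≡ s - 2 r₊ (mod 4)`. Hence
`A ≡ sign p(1) - I + N - 1 (mod 4)`. Along the family, `p_t(1) ≠ 0` keeps its sign, and
`I = (2πi)⁻¹ ∮ q'/q` is an integer depending continuously on `t`, so both are constant.
-/

open scoped Classical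
open Polynomial Metric Complex Real

theorem ZMod.intCast_sub_two_mul_eq_mul_neg_one_pow (ε : ℤ) (hε : ε = 1 ∨ ε = -1)
    (k : ℕ) :
    ((ε - 2 * k : ℤ) : ZMod 4) = ((ε * (-1) ^ k : ℤ) : ZMod 4) := by
  rw [ZMod.intCast_eq_intCast_iff_dvd_sub]
  obtain ⟨j, rfl | rfl⟩ := Nat.even_or_odd' k <;> rcases hε with rfl | rfl <;>
    push_cast [pow_succ, pow_mul] <;> simp only [one_pow] <;> omega

theorem SignType.intCast_sign_eq_ite {α : Type*} [Zero α] [LinearOrder α] {a : α}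
    (ha : a ≠ 0) :
    ((SignType.sign a : SignType) : ℤ) = if 0 < a then 1 else -1 := by
  rcases ha.lt_or_gt with h | h
  · simp [sign_neg h, h.not_gt]
  · simp [sign_pos h, h]

theorem Int.exists_greatest_ne_zero {M : Type*} [Zero M] {b : ℤ → M} {B : ℤ}
    (hB : ∀ k, B < k → b k = 0) (hne : ∃ k, b k ≠ 0) :
    ∃ d, b d ≠ 0 ∧ ∀ k, d < k → b k = 0 := by
  obtain ⟨d, hd, hmax⟩ := Int.exists_greatest_of_bdd
    ⟨B, fun k hk => not_lt.mp fun h => hk (hB k h)⟩ hne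
  exact ⟨d, hd, fun k hk => by_contra fun h => (hmax k h).not_gt hk⟩

theorem PreconnectedSpace.sign_eq_of_continuous {X : Type*} [TopologicalSpace X]
    [PreconnectedSpace X] {f : X → ℝ} (hf : Continuous f) (h0 : ∀ x, f x ≠ 0) (x y : X) :
    SignType.sign (f x) = SignType.sign (f y) :=
  PreconnectedSpace.constant inferInstance <| continuous_iff_continuousAt.mpr fun x =>
    (continuousAt_sign_of_ne_zero (h0 x)).comp hf.continuousAt

theorem Complex.one_eq_sum_ite_of_norm_ne_one {z : ℂ} (hz : ‖z‖ ≠ 1) :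
    (1 : ℤ) = (if z ∈ ball (0 : ℂ) 1 then 1 else 0) + (if z.im = 0 ∧ 1 < z.re then 1 else 0)
      + (if z.im = 0 ∧ z.re < -1 then 1 else 0)
      + ((if 0 < z.im ∧ 1 < ‖z‖ then 1 else 0)
        + (if z.im < 0 ∧ 1 < ‖z‖ then 1 else 0)) := by
  rw [mem_ball_zero_iff]
  have hre := abs_le.mp (abs_re_le_norm z)
  have hreal : z.im = 0 → ‖z‖ = |z.re| := fun h => by
    rw [← re_add_im z, h]
    simp
  split_ifs <;> grind

namespace Multiset

theorem exists_prod_eq_neg_one_pow_mul (S : Multiset ℝ) (hS : (0 : ℝ) ∉ S) :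
    ∃ ρ : ℝ, 0 < ρ ∧ S.prod = (-1) ^ (S.filter (· < 0)).card * ρ := by
  induction S using Multiset.induction_on with
  | empty => exact ⟨1, one_pos, by simp⟩
  | cons a S ih =>
    obtain ⟨ρ, hρ, hprod⟩ := ih fun h => hS (mem_cons_of_mem h)
    have ha : a ≠ 0 := fun h => hS (h ▸ mem_cons_self a S)
    rcases ha.lt_or_gt with ha | ha
    · refine ⟨-a * ρ, by nlinarith, ?_⟩
      rw [prod_cons, filter_cons_of_pos (p := (· < 0)) _ ha, card_cons, hprod]
      ring
    · refine ⟨a * ρ, by positivity, ?_⟩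
      rw [prod_cons, filter_cons_of_neg (p := (· < 0)) _ ha.not_gt, hprod]
      ring

theorem natCast_card_filter_eq_sum_ite {α : Type*} (s : Multiset α) (P : α → Prop)
    [DecidablePred P] : ((s.filter P).card : ℤ) = (s.map fun z => if P z then 1 else 0).sum := by
  induction s using Multiset.induction_on with
  | empty => simp
  | cons a s ih => by_cases h : P a <;> simp [h, ih, add_comm]

theorem filter_im_eq_zero_add_filter_im_pos_add_filter_im_neg (s : Multiset ℂ) :
    s.filter (fun z => z.im = 0) + (s.filter (fun z => 0 < z.im) + s.filter (fun z => z.im < 0))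
      = s := by
  ext z
  simp only [count_add, count_filter]
  rcases lt_trichotomy z.im 0 with h | h | h
  · simp [h, h.ne, h.not_gt]
  · simp [h]
  · simp [h, h.ne', h.not_gt]

section conj

variable {s : Multiset ℂ} (hs : s.map (starRingEnd ℂ) = s)
include hs

theorem card_filter_eq_card_filter_conj (P : ℂ → Prop) [DecidablePred P] :
    (s.filter P).card = (s.filter fun z => P (starRingEnd ℂ z)).card := by
  conv_lhs => rw [← hs]
  rw [filter_map, card_map]
  rfl

theorem filter_im_neg_eq_map_conj :
    s.filter (fun z => z.im < 0) = (s.filter fun z => 0 < z.im).map (starRingEnd ℂ) := by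
  conv_lhs => rw [← hs]
  rw [filter_map]
  exact congrArg _ (filter_congr fun z _ => by simp)

theorem card_eq_card_filter_ball_add_of_map_conj (h : ∀ z ∈ s, ‖z‖ ≠ 1) :
    (card s : ℤ) = (s.filter (· ∈ ball (0 : ℂ) 1)).card
      + (s.filter fun z => z.im = 0 ∧ 1 < z.re).card
      + (s.filter fun z => z.im = 0 ∧ z.re < -1).card
      + 2 * (s.filter fun z => 0 < z.im ∧ 1 < ‖z‖).card := by
  have hlower : (s.filter fun z => 0 < z.im ∧ 1 < ‖z‖).card
      = (s.filter fun z => z.im < 0 ∧ 1 < ‖z‖).card := by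
    rw [card_filter_eq_card_filter_conj hs]
    simp
  rw [two_mul]
  nth_rw 2 [hlower]
  simp only [natCast_card_filter_eq_sum_ite, ← sum_map_add]
  rw [← map_congr rfl fun z hz => Complex.one_eq_sum_ite_of_norm_ne_one (h z hz)]
  simp

theorem exists_prod_map_one_sub_eq (h1 : (1 : ℂ) ∉ s) :
    ∃ ρ : ℝ, 0 < ρ ∧ (s.map fun z => 1 - z).prod
      = (-1) ^ (s.filter fun z => z.im = 0 ∧ 1 < z.re).card * (ρ : ℂ) := by
  set w : ℂ := ((s.filter fun z => 0 < z.im).map fun z => 1 - z).prod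
  have hw : w ≠ 0 := by
    simp only [w, Ne, prod_eq_zero_iff, mem_map, mem_filter, sub_eq_zero, not_exists]
    rintro z ⟨⟨hz, -⟩, rfl⟩
    exact h1 hz
  have hlower : ((s.filter fun z => z.im < 0).map fun z => 1 - z).prod = starRingEnd ℂ w := by
    rw [filter_im_neg_eq_map_conj hs, map_map, map_multiset_prod, map_map]
    simp
  set S : Multiset ℝ := (s.filter fun z => z.im = 0).map fun z => 1 - z.re
  have hS : ((s.filter fun z => z.im = 0).map fun z : ℂ => 1 - z).prod = (S.prod : ℂ) := by
    rw [← ofRealHom_eq_coe, map_multiset_prod, map_map]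
    refine congrArg prod (map_congr rfl fun z hz => ?_)
    apply Complex.ext <;> simp [(mem_filter.mp hz).2]
  obtain ⟨ρ, hρ, hSρ⟩ := exists_prod_eq_neg_one_pow_mul S (by
    simp only [S, mem_map, mem_filter, not_exists, not_and]
    intro z hz him
    have hz1 : z = 1 := Complex.ext (by rw [one_re]; linarith) (by rw [one_im, hz.2])
    exact h1 (hz1 ▸ hz.1))
  have hcard : (S.filter (· < 0)).card = (s.filter fun z => z.im = 0 ∧ 1 < z.re).card := by
    simp only [S, filter_map, card_map, filter_filter]
    exact congrArg _ (filter_congr fun z _ => by simp [and_comm])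
  refine ⟨ρ * normSq w, mul_pos hρ (normSq_pos.mpr hw), ?_⟩
  have hsplit := congrArg (fun t => (t.map fun z : ℂ => 1 - z).prod)
    (filter_im_eq_zero_add_filter_im_pos_add_filter_im_neg s)
  rw [← hcard, ← hsplit, map_add, map_add, prod_add, prod_add, hS, hlower, mul_conj, hSρ]
  push_cast
  ring

end conj

end Multiset

theorem circleIntegral_sub_inv_of_notMem_sphere {c r : ℂ} {R : ℝ} (hR : 0 ≤ R)
    (hr : r ∉ sphere c R) :
    (∮ z in C(c, R), (z - r)⁻¹) = if r ∈ ball c R then 2 * π * I else 0 := by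
  split_ifs with hball
  · exact circleIntegral.integral_sub_inv_of_mem_ball hball
  · have hr' : r ∉ closedBall c R := by
      rw [← ball_union_sphere]
      exact fun h => h.elim hball hr
    have hne : ∀ z ∈ closedBall c R, z - r ≠ 0 := fun z hz h => hr' (sub_eq_zero.mp h ▸ hz)
    exact circleIntegral_eq_zero_of_differentiable_on_off_countable hR Set.countable_empty
      ((continuousOn_id.sub continuousOn_const).inv₀ hne)
      fun z hz => (differentiableAt_id.sub_const r).inv (hne z (ball_subset_closedBall hz.1))

theorem circleIntegral_multiset_sum_sub_inv {c : ℂ} {R : ℝ} (hR : 0 ≤ R) {s : Multiset ℂ}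
    (hs : ∀ r ∈ s, r ∉ sphere c R) :
    (∮ z in C(c, R), (s.map fun r => (z - r)⁻¹).sum)
      = 2 * π * I * (s.filter (· ∈ ball c R)).card := by
  induction s using Multiset.induction_on with
  | empty => simp [circleIntegral]
  | cons a s ih =>
    have ha := hs a (Multiset.mem_cons_self a s)
    have hs' := fun r hr => hs r (Multiset.mem_cons_of_mem hr)
    have hint : CircleIntegrable (fun z => (s.map fun r => (z - r)⁻¹).sum) c R :=
      ContinuousOn.circleIntegrable hR <| continuousOn_multiset_sum _ fun r hr =>
        ContinuousOn.inv₀ (by fun_prop) fun z hz h => hs' r hr (sub_eq_zero.mp h ▸ hz)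
    simp only [Multiset.map_cons, Multiset.sum_cons]
    rw [circleIntegral.integral_add
        (circleIntegrable_sub_inv_iff.mpr (.inr (by rwa [abs_of_nonneg hR]))) hint,
      circleIntegral_sub_inv_of_notMem_sphere hR ha, ih hs', Multiset.filter_cons]
    split_ifs
    · simp only [Multiset.singleton_add, Multiset.card_cons]
      push_cast
      ring
    · simp

namespace Polynomial

theorem circleIntegral_eval_derivative_div_eval {Q : ℂ[X]} {c : ℂ} {R : ℝ} (hR : 0 ≤ R)
    (hQ : ∀ z ∈ sphere c R, Q.eval z ≠ 0) :
    (∮ z in C(c, R), Q.derivative.eval z / Q.eval z)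
      = 2 * π * I * (Q.roots.filter (· ∈ ball c R)).card := by
  rw [circleIntegral.integral_congr hR fun z hz => by
    simpa only [one_div] using (IsAlgClosed.splits Q).eval_derivative_div_eval_of_ne_zero (hQ z hz)]
  exact circleIntegral_multiset_sum_sub_inv hR fun r hr hsph => hQ r hsph (isRoot_of_mem_roots hr)

theorem continuous_eval_of_continuous_coeff {X R : Type*} [TopologicalSpace X] [Semiring R]
    [TopologicalSpace R] [IsTopologicalSemiring R] {Q : X → R[X]} {n : ℕ}
    (hdeg : ∀ x, (Q x).natDegree ≤ n) (hcoeff : ∀ i, Continuous fun x => (Q x).coeff i) :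
    Continuous fun p : X × R => (Q p.1).eval p.2 := by
  simp only [fun p : X × R => eval_eq_sum_range' (Nat.lt_succ_of_le (hdeg p.1)) p.2]
  exact continuous_finsetSum _ fun i _ =>
    ((hcoeff i).comp continuous_fst).mul (continuous_snd.pow i)

theorem card_roots_filter_ball_eq {X : Type*} [TopologicalSpace X] [PreconnectedSpace X]
    {Q : X → ℂ[X]} {n : ℕ} (hdeg : ∀ x, (Q x).natDegree ≤ n)
    (hcoeff : ∀ i, Continuous fun x => (Q x).coeff i) {c : ℂ} {R : ℝ} (hR : 0 ≤ R)
    (hQ : ∀ x, ∀ z ∈ sphere c R, (Q x).eval z ≠ 0) (x y : X) :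
    ((Q x).roots.filter (· ∈ ball c R)).card = ((Q y).roots.filter (· ∈ ball c R)).card := by
  have hev := continuous_eval_of_continuous_coeff hdeg hcoeff
  have hev' : Continuous fun p : X × ℂ => (Q p.1).derivative.eval p.2 :=
    continuous_eval_of_continuous_coeff
      (fun x => (natDegree_derivative_le _).trans ((Nat.sub_le _ 1).trans (hdeg x)))
      fun i => by simp only [coeff_derivative]; exact (hcoeff (i + 1)).mul continuous_const
  have hintegral :
      Continuous fun x => ∮ z in C(c, R), (Q x).derivative.eval z / (Q x).eval z := by
    refine intervalIntegral.continuous_parametric_intervalIntegral_of_continuous' ?_ _ _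
    simp only [Function.uncurry_def, deriv_circleMap, smul_eq_mul]
    have hcirc : Continuous fun p : X × ℝ => circleMap c R p.2 :=
      (continuous_circleMap c R).comp continuous_snd
    exact (((continuous_circleMap 0 R).comp continuous_snd).mul continuous_const).mul
      ((hev'.comp (continuous_fst.prodMk hcirc)).div (hev.comp (continuous_fst.prodMk hcirc))
        fun p => hQ p.1 _ (circleMap_mem_sphere c hR p.2))
  have hcount : Continuous fun x => (((Q x).roots.filter (· ∈ ball c R)).card : ℝ) := by
    have h2πI : (2 * π * I : ℂ) ≠ 0 := by simp [pi_ne_zero, I_ne_zero]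
    convert continuous_re.comp (hintegral.div_const (2 * π * I)) using 1
    ext x
    simp [circleIntegral_eval_derivative_div_eval hR (hQ x), mul_div_cancel_left₀ _ h2πI]
  exact PreconnectedSpace.constant inferInstance
    (Nat.isClosedEmbedding_coe_real.isEmbedding.continuous_iff.mpr hcount)

theorem root_count_mod_four_of_map_conj {Q : ℂ[X]} (hQ : Q.map (starRingEnd ℂ) = Q)
    (hcirc : ∀ z : ℂ, ‖z‖ = 1 → Q.eval z ≠ 0) {a e : ℝ} (ha : Q.leadingCoeff = a)
    (he : Q.eval 1 = e) :
    ((((SignType.sign a : SignType) : ℤ) - Q.natDegree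
        + 2 * ((Q.roots.filter fun z => 0 < z.im ∧ 1 < ‖z‖).card : ℤ)
        + ((Q.roots.filter fun z => z.im = 0 ∧ z.re < -1).card : ℤ)
        - ((Q.roots.filter fun z => z.im = 0 ∧ 1 < z.re).card : ℤ) : ℤ) : ZMod 4)
      = ((((SignType.sign e : SignType) : ℤ)
        - (Q.roots.filter (· ∈ ball (0 : ℂ) 1)).card : ℤ) : ZMod 4) := by
  have hsplit := IsAlgClosed.splits Q
  have hQ0 : Q ≠ 0 := fun h => hcirc 1 (by simp) (by simp [h])
  have hroots : Q.roots.map (starRingEnd ℂ) = Q.roots := by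
    conv_rhs => rw [← hQ, hsplit.roots_map]
  have hoff : ∀ z ∈ Q.roots, ‖z‖ ≠ 1 := fun z hz h => hcirc z h (isRoot_of_mem_roots hz)
  have hcount := Multiset.card_eq_card_filter_ball_add_of_map_conj hroots hoff
  obtain ⟨ρ, hρ, hprod⟩ :=
    Multiset.exists_prod_map_one_sub_eq hroots fun h => hoff 1 h norm_one
  set rp := (Q.roots.filter fun z => z.im = 0 ∧ 1 < z.re).card
  have he' : e = a * (-1 : ℝ) ^ rp * ρ := by
    have h := hsplit.eval_eq_prod_roots 1
    rw [ha, hprod] at h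
    exact ofReal_injective (by rw [← he, h]; push_cast; ring)
  have ha0 : a ≠ 0 := by
    rw [← ofReal_ne_zero, ← ha]
    exact leadingCoeff_ne_zero.mpr hQ0
  have hsign : SignType.sign e = SignType.sign a * (-1) ^ rp := by
    rw [he', sign_mul, sign_mul, sign_pow, sign_neg neg_one_lt_zero, sign_pos hρ, mul_one]
  have hε : ((SignType.sign a : SignType) : ℤ) = 1 ∨
      ((SignType.sign a : SignType) : ℤ) = -1 := by
    rcases ha0.lt_or_gt with h | h <;> simp [sign_pos, h]
  have h4 := ZMod.intCast_sub_two_mul_eq_mul_neg_one_pow _ hε rp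
  rw [hsign, hsplit.natDegree_eq_card_roots, hcount]
  push_cast [SignType.coe_one] at h4 ⊢
  linear_combination h4

end Polynomial

/-- The ordinary polynomial `z ^ N * p(z)` of the Laurent polynomial `p = ∑ b k z ^ k`. -/
noncomputable def shiftedPoly (N : ℕ) (b : ℤ → ℝ) : ℂ[X] :=
  ∑ k ∈ Finset.Icc (-(N : ℤ)) N, C (b k : ℂ) * X ^ (k + N).toNat

section shiftedPoly

variable {N : ℕ} {b : ℤ → ℝ}

theorem coeff_shiftedPoly (hb : ∀ k, (N : ℤ) < |k| → b k = 0) (m : ℕ) :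
    (shiftedPoly N b).coeff m = b (m - N) := by
  simp only [shiftedPoly, finsetSum_coeff, coeff_C_mul, coeff_X_pow]
  rw [Finset.sum_eq_single ((m : ℤ) - N)]
  · simp
  · intro k hk hne
    rw [if_neg (by rw [Finset.mem_Icc] at hk; omega), mul_zero]
  · intro hm
    rw [hb _ (by rw [Finset.mem_Icc] at hm; rw [abs_of_nonneg (by omega)]; omega)]
    simp

theorem natDegree_shiftedPoly_le (hb : ∀ k, (N : ℤ) < |k| → b k = 0) :
    (shiftedPoly N b).natDegree ≤ 2 * N :=
  natDegree_le_iff_coeff_eq_zero.mpr fun m hm => by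
    rw [coeff_shiftedPoly hb, hb _ (by rw [abs_of_nonneg (by omega)]; omega), ofReal_zero]

theorem natDegree_shiftedPoly (hb : ∀ k, (N : ℤ) < |k| → b k = 0) {d : ℤ} (hd : b d ≠ 0)
    (htop : ∀ k, d < k → b k = 0) :
    ((shiftedPoly N b).natDegree : ℤ) = d + N ∧ (shiftedPoly N b).leadingCoeff = b d := by
  have hdN : 0 ≤ d + N := by
    by_contra h
    exact hd (hb d (by rw [abs_of_neg (by omega)]; omega))
  have hcoeff : (shiftedPoly N b).coeff (d + N).toNat = b d := by
    rw [coeff_shiftedPoly hb, Int.toNat_of_nonneg hdN, add_sub_cancel_right]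
  have hdeg : (shiftedPoly N b).natDegree = (d + N).toNat :=
    natDegree_eq_of_le_of_coeff_ne_zero
      (natDegree_le_iff_coeff_eq_zero.mpr fun m hm => by
        rw [coeff_shiftedPoly hb, htop _ (by omega), ofReal_zero])
      (by rw [hcoeff]; exact_mod_cast hd)
  exact ⟨by rw [hdeg, Int.toNat_of_nonneg hdN], by rw [leadingCoeff, hdeg, hcoeff]⟩

theorem map_conj_shiftedPoly : (shiftedPoly N b).map (starRingEnd ℂ) = shiftedPoly N b := by
  simp [shiftedPoly, Polynomial.map_sum]

theorem eval_shiftedPoly {z : ℂ} (hz : z ≠ 0) :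
    (shiftedPoly N b).eval z
      = z ^ N * ∑ k ∈ Finset.Icc (-(N : ℤ)) N, (b k : ℂ) * z ^ k := by
  simp only [shiftedPoly, eval_finsetSum, eval_mul, eval_C, eval_pow, eval_X, Finset.mul_sum]
  refine Finset.sum_congr rfl fun k hk => ?_
  rw [Finset.mem_Icc] at hk
  rw [← zpow_natCast z, Int.toNat_of_nonneg (by omega), zpow_add₀ hz, zpow_natCast]
  ring

theorem eval_one_shiftedPoly :
    (shiftedPoly N b).eval 1 = ((∑ k ∈ Finset.Icc (-(N : ℤ)) N, b k : ℝ) : ℂ) := by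
  simp [eval_shiftedPoly one_ne_zero]

theorem eval_shiftedPoly_ne_zero
    (hcirc : ∀ z : ℂ, ‖z‖ = 1 →
      ∑ k ∈ Finset.Icc (-(N : ℤ)) N, (b k : ℂ) * z ^ k ≠ 0)
    {z : ℂ} (hz : ‖z‖ = 1) : (shiftedPoly N b).eval z ≠ 0 := by
  have hz0 : z ≠ 0 := norm_ne_zero_iff.mp (hz ▸ one_ne_zero)
  rw [eval_shiftedPoly hz0]
  exact mul_ne_zero (pow_ne_zero _ hz0) (hcirc z hz)

theorem shiftedPoly_root_count_mod_four (hb : ∀ k, (N : ℤ) < |k| → b k = 0)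
    (hcirc : ∀ z : ℂ, ‖z‖ = 1 →
      ∑ k ∈ Finset.Icc (-(N : ℤ)) N, (b k : ℂ) * z ^ k ≠ 0)
    {d : ℤ} (hd : b d ≠ 0) (htop : ∀ k, d < k → b k = 0) :
    ((((if 0 < b d then 1 else -1) - 1 - d)
        + 2 * (((shiftedPoly N b).roots.filter fun z => 0 < z.im ∧ 1 < ‖z‖).card : ℤ)
        + (((shiftedPoly N b).roots.filter fun z => z.im = 0 ∧ z.re < -1).card : ℤ)
        - (((shiftedPoly N b).roots.filter fun z => z.im = 0 ∧ 1 < z.re).card : ℤ) : ℤ)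
        : ZMod 4)
      = ((((SignType.sign (∑ k ∈ Finset.Icc (-(N : ℤ)) N, b k) : SignType) : ℤ) - 1 + N
        - ((shiftedPoly N b).roots.filter (· ∈ ball (0 : ℂ) 1)).card : ℤ) : ZMod 4) := by
  obtain ⟨hdeg, hlead⟩ := natDegree_shiftedPoly hb hd htop
  have h := root_count_mod_four_of_map_conj map_conj_shiftedPoly
    (fun z hz => eval_shiftedPoly_ne_zero hcirc hz) hlead eval_one_shiftedPoly
  rw [SignType.intCast_sign_eq_ite hd, hdeg] at h
  push_cast at h ⊢
  linear_combination h

end shiftedPoly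

/-- Let `(p_t)` be a continuous family of nonzero real Laurent polynomials
(coefficients `c t k`, supported in `[-N, N]`), none of which vanishes on the unit circle,
for `t ∈ [0,1]`.  With `d` the top degree, `s` the sign of the leading coefficient,
`r₊` (resp. `r₋`) the number of real roots `> 1` (resp. `< −1`) and `p` the number of pairs
of complex-conjugate non-real roots of modulus `> 1` (all counted with multiplicity, computed
from the associated ordinary polynomial `q t = z^N · p_t`), the quantity
`A_t = (s − 1 − d) + 2p + r₋ − r₊` is constant modulo `4`. -/
theorem laurent_root_count_mod_four_invariant
    (N : ℕ) (c : ℝ → ℤ → ℝ)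
    (hsupp : ∀ t k, (N : ℤ) < |k| → c t k = 0)
    (hcont : ∀ k, Continuous fun t => c t k)
    (hne : ∀ t ∈ Set.Icc (0:ℝ) 1, ∃ k, c t k ≠ 0)
    (hcircle : ∀ t ∈ Set.Icc (0:ℝ) 1, ∀ z : ℂ, ‖z‖ = 1 →
      (∑ k ∈ Finset.Icc (-(N:ℤ)) (N:ℤ), (c t k : ℂ) * z ^ k) ≠ 0)
    (q : ℝ → Polynomial ℂ)
    (hq : ∀ t, q t = ∑ k ∈ Finset.Icc (-(N:ℤ)) (N:ℤ),
      Polynomial.C ((c t k : ℂ)) * Polynomial.X ^ (k + N).toNat)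
    (A : ℝ → ℤ)
    (hA : ∀ t ∈ Set.Icc (0:ℝ) 1, ∀ d : ℤ,
      (c t d ≠ 0 ∧ ∀ k, d < k → c t k = 0) →
      A t = ((if 0 < c t d then 1 else -1) - 1 - d)
        + 2 * (((q t).roots.filter (fun z => 0 < z.im ∧ 1 < ‖z‖)).card : ℤ)
        + (((q t).roots.filter (fun z => z.im = 0 ∧ z.re < -1)).card : ℤ)
        - (((q t).roots.filter (fun z => z.im = 0 ∧ 1 < z.re)).card : ℤ)) :
    ∀ t₀ ∈ Set.Icc (0:ℝ) 1, ∀ t₁ ∈ Set.Icc (0:ℝ) 1,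
      (A t₀ : ZMod 4) = (A t₁ : ZMod 4) := by
  obtain rfl : q = fun t => shiftedPoly N (c t) := funext hq
  have hA_mod : ∀ t ∈ Set.Icc (0 : ℝ) 1, (A t : ZMod 4)
      = ((((SignType.sign (∑ k ∈ Finset.Icc (-(N : ℤ)) N, c t k) : SignType) : ℤ) - 1 + N
        - ((shiftedPoly N (c t)).roots.filter (· ∈ ball (0 : ℂ) 1)).card : ℤ) : ZMod 4) := by
    intro t ht
    obtain ⟨d, hd, htop⟩ := Int.exists_greatest_ne_zero (B := N)
      (fun k hk => hsupp t k (hk.trans_le (le_abs_self k))) (hne t ht)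
    rw [hA t ht d ⟨hd, htop⟩]
    exact shiftedPoly_root_count_mod_four (hsupp t) (hcircle t ht) hd htop
  intro t₀ h₀ t₁ h₁
  have hsign := PreconnectedSpace.sign_eq_of_continuous (X := Set.Icc (0 : ℝ) 1)
    (f := fun t => ∑ k ∈ Finset.Icc (-(N : ℤ)) N, c t k)
    (continuous_finsetSum _ fun k _ => (hcont k).comp continuous_subtype_val)
    (fun t => by
      have h := eval_shiftedPoly_ne_zero (hcircle t t.2) norm_one
      rwa [eval_one_shiftedPoly, ofReal_ne_zero] at h) ⟨t₀, h₀⟩ ⟨t₁, h₁⟩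
  have hdisk := Polynomial.card_roots_filter_ball_eq (X := Set.Icc (0 : ℝ) 1)
    (Q := fun t => shiftedPoly N (c t)) (fun t => natDegree_shiftedPoly_le (hsupp t))
    (fun i => by simp only [coeff_shiftedPoly (hsupp _)]; fun_prop) zero_le_one
    (fun t z hz => eval_shiftedPoly_ne_zero (hcircle t t.2) (mem_sphere_zero_iff_norm.mp hz))
    ⟨t₀, h₀⟩ ⟨t₁, h₁⟩
  simp only at hsign hdisk
  rw [hA_mod t₀ h₀, hA_mod t₁ h₁, hsign, hdisk]
end

section
/- Every subgroup H of finite index in the Klein bottle group π₁(K) = ⟨a, b | a b a^{−1} b⟩ that is itself isomorphic to π₁(K) is of the form H = ⟨a^n b^p, b^m⟩ for some integers m ≥ 1, n ≥ 1 with n odd, and p ∈ ℤ. -/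
/-- The single relator `a b a⁻¹ b` of the Klein bottle group. -/
def kleinRels : Set (FreeGroup Bool) :=
  {FreeGroup.of true * FreeGroup.of false * (FreeGroup.of true)⁻¹ * FreeGroup.of false}

/-- The Klein bottle group `π₁(K) = ⟨a, b | a b a⁻¹ b⟩`. -/
abbrev KleinGroup := PresentedGroup kleinRels

/-- The generator `a` of the Klein bottle group. -/
def ka : KleinGroup := PresentedGroup.of true

/-- The generator `b` of the Klein bottle group. -/
def kb : KleinGroup := PresentedGroup.of false

/-!
Every element of `π₁(K)` can be written `a^i b^j`, and the exponent sum in `a` is a homomorphism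
to `ℤ` whose kernel is `⟨b⟩`. For `H` of finite index, `H ∩ ⟨b⟩ = ⟨b^m⟩` and the `a`-exponents of
elements of `H` form `nℤ`, with `m, n ≥ 1`. If `a^n b^p ∈ H` realises `n`, every `x ∈ H` differs from
a power of it by an element of `H ∩ ⟨b⟩`, so `H = ⟨a^n b^p, b^m⟩`. Since `a²` commutes with `b`, for
even `n` these two generators commute and `H` is abelian. But `π₁(K)` is not: sending `a` to a
reflection and `b` to a rotation defines a homomorphism to the infinite dihedral group, and the
images do not commute.
-/

open Subgroup Multiplicative

theorem Int.exists_pos_forall_ofAdd_mem_iff_dvd (S : Subgroup (Multiplicative ℤ)) {k : ℤ}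
    (hk : k ≠ 0) (hkS : ofAdd k ∈ S) :
    ∃ n : ℕ, 0 < n ∧ ∀ i : ℤ, ofAdd i ∈ S ↔ (n : ℤ) ∣ i := by
  obtain ⟨a, ha⟩ := Int.subgroup_cyclic S.toAddSubgroup'
  have mem (i : ℤ) : ofAdd i ∈ S ↔ a ∣ i := by
    rw [← mem_toAddSubgroup', ha, ← AddSubgroup.zmultiples_eq_closure, Int.mem_zmultiples_iff]
  refine ⟨a.natAbs, Int.natAbs_pos.2 ?_, fun i => by rw [mem, Int.natAbs_dvd]⟩
  rintro rfl
  exact hk (zero_dvd_iff.1 ((mem k).1 hkS))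

theorem Subgroup.exists_pos_forall_zpow_mem_iff_dvd {G : Type*} [Group G] (H : Subgroup G)
    [H.FiniteIndex] (g : G) : ∃ m : ℕ, 0 < m ∧ ∀ j : ℤ, g ^ j ∈ H ↔ (m : ℤ) ∣ j := by
  obtain ⟨k, hk, -, hkH⟩ := exists_pow_mem_of_index_ne_zero (FiniteIndex.index_ne_zero (H := H)) g
  simpa using Int.exists_pos_forall_ofAdd_mem_iff_dvd (H.comap (zpowersHom G g)) (k := k)
    (by omega) (by simpa using hkH)

namespace KleinGroup

theorem ka_mul_kb_mul_ka_inv : ka * kb * ka⁻¹ = kb⁻¹ :=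
  eq_inv_of_mul_eq_one_left (PresentedGroup.one_of_mem rfl)

theorem ka_inv_mul_kb_mul_ka : ka⁻¹ * kb * ka = kb⁻¹ :=
  calc ka⁻¹ * kb * ka = ka⁻¹ * (ka * kb * ka⁻¹)⁻¹ * ka := by rw [ka_mul_kb_mul_ka_inv, inv_inv]
    _ = kb⁻¹ := by group

theorem kb_zpow_mul_ka (j : ℤ) : kb ^ j * ka = ka * kb ^ (-j) :=
  calc kb ^ j * ka = ka * (ka⁻¹ * kb * ka⁻¹⁻¹) ^ j := by rw [conj_zpow]; group
    _ = ka * kb ^ (-j) := by rw [inv_inv, ka_inv_mul_kb_mul_ka, inv_zpow, zpow_neg]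

theorem kb_zpow_mul_ka_inv (j : ℤ) : kb ^ j * ka⁻¹ = ka⁻¹ * kb ^ (-j) :=
  calc kb ^ j * ka⁻¹ = ka⁻¹ * (ka * kb * ka⁻¹) ^ j := by rw [conj_zpow]; group
    _ = ka⁻¹ * kb ^ (-j) := by rw [ka_mul_kb_mul_ka_inv, inv_zpow, zpow_neg]

theorem commute_ka_sq_kb : Commute (ka ^ 2) kb := by
  have h₁ : kb * ka = ka * kb⁻¹ := by simpa using kb_zpow_mul_ka 1
  have h₂ : kb⁻¹ * ka = ka * kb := by simpa using kb_zpow_mul_ka (-1)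
  calc ka ^ 2 * kb = ka * (ka * kb) := by rw [sq, mul_assoc]
    _ = ka * kb⁻¹ * ka := by rw [← h₂, mul_assoc]
    _ = kb * ka ^ 2 := by rw [← h₁, mul_assoc, sq]

theorem commute_ka_zpow_kb_zpow {i : ℤ} (hi : Even i) (j : ℤ) : Commute (ka ^ i) (kb ^ j) := by
  obtain ⟨k, rfl⟩ := hi
  rw [← two_mul, zpow_mul]
  exact commute_ka_sq_kb.zpow_zpow k j

theorem exists_eq_ka_zpow_mul_kb_zpow (x : KleinGroup) : ∃ i j : ℤ, x = ka ^ i * kb ^ j := by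
  induction (PresentedGroup.closure_range_of kleinRels).ge (mem_top x)
    using closure_induction_right with
  | one => exact ⟨0, 0, by simp⟩
  | mul_right x _ y hy ih =>
    obtain ⟨i, j, rfl⟩ := ih
    obtain ⟨_ | _, rfl⟩ := hy
    · exact ⟨i, j + 1, by rw [zpow_add_one, mul_assoc]; rfl⟩
    · exact ⟨i + 1, -j, by rw [mul_assoc, ← ka, kb_zpow_mul_ka, ← mul_assoc, zpow_add_one]⟩
  | mul_inv_cancel x _ y hy ih =>
    obtain ⟨i, j, rfl⟩ := ih
    obtain ⟨_ | _, rfl⟩ := hy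
    · exact ⟨i, j - 1, by rw [zpow_sub_one, mul_assoc]; rfl⟩
    · exact ⟨i - 1, -j, by rw [mul_assoc, ← ka, kb_zpow_mul_ka_inv, ← mul_assoc, zpow_sub_one]⟩

def aExponent : KleinGroup →* Multiplicative ℤ :=
  PresentedGroup.toGroup (f := fun x => if x then ofAdd 1 else 1) (by
    rintro _ rfl
    simp)

@[simp] theorem aExponent_ka : aExponent ka = ofAdd 1 := PresentedGroup.toGroup.of _
@[simp] theorem aExponent_kb : aExponent kb = 1 := PresentedGroup.toGroup.of _

theorem aExponent_ka_zpow_mul_kb_zpow (i j : ℤ) : aExponent (ka ^ i * kb ^ j) = ofAdd i := by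
  simp [← ofAdd_zsmul]

theorem exists_eq_kb_zpow_of_aExponent_eq_one {x : KleinGroup} (hx : aExponent x = 1) :
    ∃ j : ℤ, x = kb ^ j := by
  obtain ⟨i, j, rfl⟩ := exists_eq_ka_zpow_mul_kb_zpow x
  obtain rfl : i = 0 := by simpa [aExponent_ka_zpow_mul_kb_zpow] using hx
  exact ⟨j, by simp⟩

def toDihedralGroup : KleinGroup →* DihedralGroup 0 :=
  PresentedGroup.toGroup (f := fun x => if x then .sr 0 else .r 1) (by
    rintro _ rfl
    simp [DihedralGroup.sr_mul_r, DihedralGroup.sr_mul_sr, DihedralGroup.inv_sr])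

theorem not_commute_ka_kb : ¬ Commute ka kb := by
  intro h
  have := congrArg toDihedralGroup h.eq
  simp [toDihedralGroup, ka, kb, DihedralGroup.sr_mul_r, DihedralGroup.r_mul_sr] at this

theorem le_closure_of_aExponent_dvd {H : Subgroup KleinGroup} {m n : ℕ} {p : ℤ}
    (hb : ∀ j : ℤ, kb ^ j ∈ H ↔ (m : ℤ) ∣ j) (ha : ∀ x ∈ H, (n : ℤ) ∣ (aExponent x).toAdd)
    (hgen : ka ^ n * kb ^ p ∈ H) : H ≤ closure {ka ^ n * kb ^ p, kb ^ m} := by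
  set g := ka ^ n * kb ^ p with hg
  intro x hx
  obtain ⟨t, ht⟩ := ha x hx
  have hg_exp : aExponent g = ofAdd (n : ℤ) := by
    rw [hg, ← zpow_natCast, aExponent_ka_zpow_mul_kb_zpow]
  have hw : aExponent ((g ^ t)⁻¹ * x) = 1 := by
    rw [map_mul, map_inv, map_zpow, hg_exp, ← ofAdd_toAdd (aExponent x), ht, ← ofAdd_zsmul,
      ← ofAdd_neg, ← ofAdd_add, smul_eq_mul, mul_comm, neg_add_cancel, ofAdd_zero]
  obtain ⟨s, hs⟩ := exists_eq_kb_zpow_of_aExponent_eq_one hw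
  obtain ⟨r, rfl⟩ := (hb s).1 (hs ▸ H.mul_mem (H.inv_mem (H.zpow_mem hgen t)) hx)
  have hx : x = g ^ t * (kb ^ m) ^ r := by
    rw [← zpow_natCast, ← zpow_mul, ← hs, mul_inv_cancel_left]
  rw [hx]
  exact mul_mem (zpow_mem (subset_closure (by simp)) t) (zpow_mem (subset_closure (by simp)) r)

theorem exists_eq_closure_of_finiteIndex (H : Subgroup KleinGroup) [H.FiniteIndex] :
    ∃ (m n : ℕ) (p : ℤ), 1 ≤ m ∧ 1 ≤ n ∧ H = closure {ka ^ n * kb ^ p, kb ^ m} := by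
  obtain ⟨m, hm, hb⟩ := H.exists_pos_forall_zpow_mem_iff_dvd kb
  obtain ⟨k, hk, -, hkH⟩ := exists_pow_mem_of_index_ne_zero (FiniteIndex.index_ne_zero (H := H)) ka
  obtain ⟨n, hn, ha⟩ := Int.exists_pos_forall_ofAdd_mem_iff_dvd (H.map aExponent) (k := k)
    (by omega) ⟨ka ^ k, hkH, by simp [← ofAdd_nsmul]⟩
  obtain ⟨g, hgen, hgen_exp⟩ := (ha n).2 dvd_rfl
  obtain ⟨i, p, rfl⟩ := exists_eq_ka_zpow_mul_kb_zpow g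
  obtain rfl : i = n := by simpa [aExponent_ka_zpow_mul_kb_zpow] using hgen_exp
  rw [zpow_natCast] at hgen
  refine ⟨m, n, p, hm, hn, le_antisymm (le_closure_of_aExponent_dvd hb ?_ hgen) ?_⟩
  · exact fun x hx => (ha _).1 ⟨x, hx, rfl⟩
  · rw [closure_le]
    rintro _ (rfl | rfl)
    · exact hgen
    · simpa using (hb m).2 dvd_rfl

theorem isMulCommutative_closure_of_even {n : ℕ} (hn : Even n) (p : ℤ) (m : ℕ) :
    IsMulCommutative (closure {ka ^ n * kb ^ p, kb ^ m}) := by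
  have hcomm : Commute (ka ^ n * kb ^ p) (kb ^ m) := by
    rw [← zpow_natCast, ← zpow_natCast kb]
    exact (commute_ka_zpow_kb_zpow (by exact_mod_cast hn) _).mul_left (Commute.zpow_zpow_self _ _ _)
  refine isMulCommutative_closure ?_
  rintro _ (rfl | rfl) _ (rfl | rfl)
  exacts [rfl, hcomm.eq, hcomm.symm.eq, rfl]

end KleinGroup

open KleinGroup in
/-- Every finite-index subgroup `H` of the Klein bottle group
`π₁(K) = ⟨a, b | a b a⁻¹ b⟩` which is itself isomorphic to `π₁(K)` is of the form
`H = ⟨a^n b^p, b^m⟩` with `m, n ≥ 1`, `n` odd and `p ∈ ℤ`. -/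
theorem klein_selfcover_subgroups (H : Subgroup KleinGroup)
    (hfin : H.FiniteIndex) (hiso : Nonempty (H ≃* KleinGroup)) :
    ∃ (m n : ℕ) (p : ℤ), 1 ≤ m ∧ 1 ≤ n ∧ Odd n ∧
      H = Subgroup.closure {ka ^ n * kb ^ p, kb ^ m} := by
  obtain ⟨m, n, p, hm, hn, rfl⟩ := exists_eq_closure_of_finiteIndex H
  refine ⟨m, n, p, hm, hn, Nat.not_even_iff_odd.1 fun heven => ?_, rfl⟩
  have := isMulCommutative_closure_of_even heven p m
  obtain ⟨e⟩ := hiso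
  have hcomm : ka * kb = kb * ka := by simpa using congrArg e (mul_comm' (e.symm ka) (e.symm kb))
  exact not_commute_ka_kb hcomm
end

section
/- In the Klein bottle group π₁(K) = ⟨a, b | a b a^{−1} b⟩, the set R = {b^i a^j : 0 ≤ i < m, 0 ≤ j < n} is a complete system of representatives for the left cosets of the subgroup H = ⟨a^n, b^m⟩ (n odd): every element g ∈ π₁(K) can be written uniquely as g = r h with r ∈ R and h ∈ H. Moreover, the coset multiplication rules hold: b·(b^i a^j) = b^{i+1} a^j for i < m−1, and b·(b^{m−1} a^j) = a^j · b^{m(−1)^j}; a·(b^i a^j) = b^{m−i} a^{j+1} · b^{m(−1)^j} for 0 < i, j < n−1 (with analogous formulas in the boundary cases j = n−1 and i = 0). -/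
theorem Int.coe_negOnePow_mul_self (q : ℤ) : (q.negOnePow : ℤ) * q.negOnePow = 1 := by
  rw [← Units.val_mul, Int.units_mul_self, Units.val_one]

section ConjEqInv

variable {G : Type*} [Group G] {a b : G}

theorem conj_zpow_of_conj_eq_inv (hab : a * b * a⁻¹ = b⁻¹) (q : ℤ) :
    MulAut.conj (a ^ q) b = b ^ (q.negOnePow : ℤ) := by
  have hab' : a⁻¹ * b * a = b⁻¹ := by
    simpa [mul_assoc] using (congrArg (fun x => a⁻¹ * x⁻¹ * a) hab).symm
  induction q using Int.induction_on with
  | zero => simp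
  | succ k ih =>
    rw [zpow_add_one, map_mul, MulAut.mul_apply, MulAut.conj_apply a, hab, map_inv, ih,
      Int.negOnePow_succ, Units.val_neg, zpow_neg]
  | pred k ih =>
    rw [zpow_sub_one, map_mul, MulAut.mul_apply, MulAut.conj_apply a⁻¹, inv_inv, hab', map_inv,
      ih, Int.negOnePow_sub, Int.negOnePow_one, mul_neg_one, Units.val_neg, zpow_neg]

theorem zpow_mul_zpow_of_conj_eq_inv (hab : a * b * a⁻¹ = b⁻¹) (q p : ℤ) :
    a ^ q * b ^ p = b ^ ((q.negOnePow : ℤ) * p) * a ^ q := by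
  rw [zpow_mul, ← conj_zpow_of_conj_eq_inv hab, ← map_zpow, MulAut.conj_apply,
    inv_mul_cancel_right]

theorem zpow_mul_zpow_mul_of_conj_eq_inv (hab : a * b * a⁻¹ = b⁻¹) (p q p' q' : ℤ) :
    b ^ p * a ^ q * (b ^ p' * a ^ q') = b ^ (p + (q.negOnePow : ℤ) * p') * a ^ (q + q') := by
  rw [zpow_add, zpow_add, mul_assoc, ← mul_assoc (a ^ q), zpow_mul_zpow_of_conj_eq_inv hab]
  group

theorem mul_pow_pred_mul_pow_of_conj_eq_inv (hab : a * b * a⁻¹ = b⁻¹) {m : ℕ} (hm : 1 ≤ m)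
    (j : ℕ) : b * (b ^ (m - 1) * a ^ j) = a ^ j * b ^ ((m : ℤ) * (-1) ^ j) := by
  rw [← mul_assoc, ← pow_succ', Nat.sub_add_cancel hm, ← zpow_natCast a,
    zpow_mul_zpow_of_conj_eq_inv hab, ← zpow_natCast b, ← Int.coe_negOnePow_natCast]
  congr 2
  linear_combination (-(m : ℤ)) * Int.coe_negOnePow_mul_self j

theorem mul_pow_mul_pow_of_conj_eq_inv (hab : a * b * a⁻¹ = b⁻¹) {i m : ℕ} (him : i ≤ m)
    (j : ℕ) : a * (b ^ i * a ^ j) = b ^ (m - i) * a ^ (j + 1) * b ^ ((m : ℤ) * (-1) ^ j) := by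
  have hi : a * b ^ (i : ℤ) = b ^ (-(i : ℤ)) * a := by
    simpa using zpow_mul_zpow_of_conj_eq_inv hab 1 i
  have hm : a ^ ((j + 1 : ℕ) : ℤ) * b ^ ((m : ℤ) * (-1) ^ j) =
      b ^ (-(m : ℤ)) * a ^ ((j + 1 : ℕ) : ℤ) := by
    rw [zpow_mul_zpow_of_conj_eq_inv hab, ← Int.coe_negOnePow_natCast, Nat.cast_succ,
      Int.negOnePow_succ, Units.val_neg]
    congr 2
    linear_combination (-(m : ℤ)) * Int.coe_negOnePow_mul_self j
  calc a * (b ^ i * a ^ j) = b ^ (-(i : ℤ)) * a ^ (j + 1) := by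
        rw [← mul_assoc, ← zpow_natCast b, hi, mul_assoc, ← pow_succ']
    _ = b ^ ((m - i : ℕ) : ℤ) * (b ^ (-(m : ℤ)) * a ^ ((j + 1 : ℕ) : ℤ)) := by
        rw [← mul_assoc, ← zpow_add, zpow_natCast]; congr 2; omega
    _ = b ^ (m - i) * a ^ (j + 1) * b ^ ((m : ℤ) * (-1) ^ j) := by
        rw [← hm, zpow_natCast, zpow_natCast, mul_assoc]

theorem mem_closure_pair_iff_of_conj_eq_inv (hab : a * b * a⁻¹ = b⁻¹) {g : G} :
    g ∈ Subgroup.closure {a, b} ↔ ∃ p q : ℤ, g = b ^ p * a ^ q := by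
  constructor
  · intro hg
    induction hg using Subgroup.closure_induction with
    | mem x hx =>
      rcases hx with rfl | rfl
      · exact ⟨0, 1, by simp⟩
      · exact ⟨1, 0, by simp⟩
    | one => exact ⟨0, 0, by simp⟩
    | mul x y _ _ hx hy =>
      obtain ⟨p, q, rfl⟩ := hx
      obtain ⟨p', q', rfl⟩ := hy
      exact ⟨_, _, zpow_mul_zpow_mul_of_conj_eq_inv hab p q p' q'⟩
    | inv x _ hx =>
      obtain ⟨p, q, rfl⟩ := hx
      refine ⟨((-q).negOnePow : ℤ) * -p, -q, ?_⟩
      rw [← zpow_mul_zpow_of_conj_eq_inv hab, mul_inv_rev, zpow_neg, zpow_neg]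
  · rintro ⟨p, q, rfl⟩
    exact mul_mem (zpow_mem (Subgroup.subset_closure (by simp)) p)
      (zpow_mem (Subgroup.subset_closure (by simp)) q)

end ConjEqInv

theorem ka_mul_kb_mul_ka_inv : ka * kb * ka⁻¹ = kb⁻¹ :=
  mul_eq_one_iff_eq_inv.mp <|
    (QuotientGroup.eq_one_iff _).2 (Subgroup.subset_normalClosure rfl)

theorem closure_ka_kb : Subgroup.closure {ka, kb} = ⊤ := by
  rw [← PresentedGroup.closure_range_of kleinRels, Bool.range_eq, Set.pair_comm]
  rfl

abbrev KleinModel :=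
  Multiplicative ℤ ⋊[zpowersHom _ (MulEquiv.inv (Multiplicative ℤ))] Multiplicative ℤ

def toKleinModel : KleinGroup →* KleinModel :=
  PresentedGroup.toGroup (f := fun x => if x then SemidirectProduct.inr (.ofAdd 1)
    else SemidirectProduct.inl (.ofAdd 1)) <| by
  rintro r rfl
  ext <;> rfl

theorem toKleinModel_kb_zpow_mul_ka_zpow (p q : ℤ) :
    toKleinModel (kb ^ p * ka ^ q) = ⟨.ofAdd p, .ofAdd q⟩ := by
  rw [SemidirectProduct.mk_eq_inl_mul_inr, map_mul, map_zpow, map_zpow]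
  simp [toKleinModel, ka, kb, ← map_zpow, ← ofAdd_zsmul]

theorem kb_zpow_mul_ka_zpow_injective :
    Function.Injective fun x : ℤ × ℤ => kb ^ x.1 * ka ^ x.2 := by
  intro x y hxy
  have h := congrArg toKleinModel hxy
  simp only [toKleinModel_kb_zpow_mul_ka_zpow] at h
  exact Prod.ext (congrArg (·.left) h) (congrArg (·.right) h)

theorem exists_eq_kb_zpow_mul_ka_zpow (g : KleinGroup) : ∃ p q : ℤ, g = kb ^ p * ka ^ q :=
  (mem_closure_pair_iff_of_conj_eq_inv ka_mul_kb_mul_ka_inv).mp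
    (closure_ka_kb ▸ Subgroup.mem_top g)

theorem mem_closure_ka_pow_kb_pow_iff {m n : ℕ} (hn : Odd n) {g : KleinGroup} :
    g ∈ Subgroup.closure {ka ^ n, kb ^ m} ↔
      ∃ k l : ℤ, g = kb ^ ((m : ℤ) * k) * ka ^ ((n : ℤ) * l) := by
  have h : ka ^ n * kb ^ m * (ka ^ n)⁻¹ = (kb ^ m)⁻¹ := by
    have := conj_zpow_of_conj_eq_inv ka_mul_kb_mul_ka_inv n
    rw [zpow_natCast, Int.negOnePow_odd _ (by exact_mod_cast hn), Units.val_neg, Units.val_one,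
      zpow_neg_one, MulAut.conj_apply] at this
    rw [← conj_pow, this, inv_pow]
  simp only [mem_closure_pair_iff_of_conj_eq_inv h, zpow_mul, zpow_natCast]

theorem Nat.eq_of_lt_of_lt_of_intCast_add_mul_eq {m i i' : ℕ} {k : ℤ} (hi : i < m)
    (hi' : i' < m) (h : (i : ℤ) + m * k = i') : i = i' :=
  Nat.ModEq.eq_of_lt_of_lt
    (Int.natCast_modEq_iff.mp (Int.modEq_iff_dvd.mpr ⟨k, by omega⟩)) hi hi'

theorem eq_and_eq_of_kb_pow_mul_ka_pow_mul_eq {m n i i' j j' : ℕ} (hn : Odd n)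
    (hi : i < m) (hi' : i' < m) (hj : j < n) (hj' : j' < n) {h h' : KleinGroup}
    (hh : h ∈ Subgroup.closure {ka ^ n, kb ^ m}) (hh' : h' ∈ Subgroup.closure {ka ^ n, kb ^ m})
    (heq : kb ^ i * ka ^ j * h = kb ^ i' * ka ^ j' * h') : i = i' ∧ j = j' := by
  obtain ⟨k, l, hkl⟩ := (mem_closure_ka_pow_kb_pow_iff hn).mp (mul_mem hh (inv_mem hh'))
  have h₀ : kb ^ (i : ℤ) * ka ^ (j : ℤ) * (kb ^ ((m : ℤ) * k) * ka ^ ((n : ℤ) * l)) =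
      kb ^ (i' : ℤ) * ka ^ (j' : ℤ) := by
    rw [← hkl, ← mul_assoc, mul_inv_eq_iff_eq_mul]
    simpa only [zpow_natCast] using heq
  rw [zpow_mul_zpow_mul_of_conj_eq_inv ka_mul_kb_mul_ka_inv] at h₀
  obtain ⟨hi₀, hj₀⟩ :=
    Prod.mk.inj (kb_zpow_mul_ka_zpow_injective (a₁ := (_, _)) (a₂ := (_, _)) h₀)
  exact ⟨Nat.eq_of_lt_of_lt_of_intCast_add_mul_eq hi hi' (k := (j : ℤ).negOnePow * k)
      (by linear_combination hi₀),
    Nat.eq_of_lt_of_lt_of_intCast_add_mul_eq hj hj' hj₀⟩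

theorem exists_kb_pow_mul_ka_pow_mul_mem {m n : ℕ} (hm : 0 < m) (hn : Odd n) (g : KleinGroup) :
    ∃ i < m, ∃ j < n, ∃ h ∈ Subgroup.closure {ka ^ n, kb ^ m}, g = kb ^ i * ka ^ j * h := by
  obtain ⟨p, q, rfl⟩ := exists_eq_kb_zpow_mul_ka_zpow g
  have hm' : (0 : ℤ) < m := by exact_mod_cast hm
  have hn' : (0 : ℤ) < n := by exact_mod_cast hn.pos
  obtain ⟨i, hi⟩ := Int.eq_ofNat_of_zero_le (Int.emod_nonneg p hm'.ne')
  obtain ⟨j, hj⟩ := Int.eq_ofNat_of_zero_le (Int.emod_nonneg q hn'.ne')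
  have hi_lt : i < m := by have := Int.emod_lt_of_pos p hm'; omega
  have hj_lt : j < n := by have := Int.emod_lt_of_pos q hn'; omega
  -- the sign `(-1) ^ j` compensates for moving `b ^ (m * k)` past `a ^ j`
  refine ⟨i, hi_lt, j, hj_lt, _, (mem_closure_ka_pow_kb_pow_iff hn).mpr
    ⟨(j : ℤ).negOnePow * (p / m), q / n, rfl⟩, ?_⟩
  rw [← zpow_natCast kb, ← zpow_natCast ka,
    zpow_mul_zpow_mul_of_conj_eq_inv ka_mul_kb_mul_ka_inv]
  congr 2
  · linear_combination
      hi - Int.emod_add_mul_ediv p m - m * (p / m) * Int.coe_negOnePow_mul_self j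
  · linear_combination hj - Int.emod_add_mul_ediv q n

theorem klein_coset_representatives_general (m n : ℕ) (hm : 1 ≤ m) (hodd : Odd n) :
    (∀ g : KleinGroup,
      ∃! t : Fin m × Fin n × (Subgroup.closure {ka ^ n, kb ^ m} : Subgroup KleinGroup),
        g = kb ^ (t.1 : ℕ) * ka ^ (t.2.1 : ℕ) * (t.2.2 : KleinGroup))
    ∧ (∀ i j : ℕ, kb * (kb ^ i * ka ^ j) = kb ^ (i + 1) * ka ^ j)
    ∧ (∀ j : ℕ, kb * (kb ^ (m - 1) * ka ^ j) = ka ^ j * kb ^ ((m : ℤ) * (-1) ^ j))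
    ∧ (∀ i j : ℕ, 0 < i → i < m →
        ka * (kb ^ i * ka ^ j) = kb ^ (m - i) * ka ^ (j + 1) * kb ^ ((m : ℤ) * (-1) ^ j)) := by
  refine ⟨fun g => ?_, fun i j => by rw [← mul_assoc, ← pow_succ'],
    mul_pow_pred_mul_pow_of_conj_eq_inv ka_mul_kb_mul_ka_inv hm,
    fun i j _ him => mul_pow_mul_pow_of_conj_eq_inv ka_mul_kb_mul_ka_inv him.le j⟩
  obtain ⟨i, hi, j, hj, h, hh, rfl⟩ := exists_kb_pow_mul_ka_pow_mul_mem hm hodd g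
  refine ⟨(⟨i, hi⟩, ⟨j, hj⟩, ⟨h, hh⟩), rfl, ?_⟩
  rintro ⟨⟨i', hi'⟩, ⟨j', hj'⟩, ⟨h', hh'⟩⟩ heq
  obtain ⟨rfl, rfl⟩ := eq_and_eq_of_kb_pow_mul_ka_pow_mul_eq hodd hi' hi hj' hj hh' hh heq.symm
  simp [mul_left_cancel heq]

/-- In the Klein bottle group `π₁(K) = ⟨a, b | a b a⁻¹ b⟩`, the set
`R = {b^i a^j : 0 ≤ i < m, 0 ≤ j < n}` (`n` odd) is a complete system of representatives
for the left cosets of `H = ⟨a^n, b^m⟩`: every `g` can be written uniquely as `g = r·h`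
with `r ∈ R`, `h ∈ H`.  Moreover the multiplication rules hold:
`b·(b^i a^j) = b^{i+1} a^j`, `b·(b^{m−1} a^j) = a^j b^{m(−1)^j}`, and for `0 < i < m`,
`a·(b^i a^j) = b^{m−i} a^{j+1} b^{m(−1)^j}`. -/
theorem klein_coset_representatives (m n : ℕ) (hm : 1 ≤ m) (hn : 1 ≤ n) (hodd : Odd n) :
    (∀ g : KleinGroup,
      ∃! t : Fin m × Fin n × (Subgroup.closure {ka ^ n, kb ^ m} : Subgroup KleinGroup),
        g = kb ^ (t.1 : ℕ) * ka ^ (t.2.1 : ℕ) * (t.2.2 : KleinGroup))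
    ∧ (∀ i j : ℕ, kb * (kb ^ i * ka ^ j) = kb ^ (i + 1) * ka ^ j)
    ∧ (∀ j : ℕ, kb * (kb ^ (m - 1) * ka ^ j) = ka ^ j * kb ^ ((m : ℤ) * (-1) ^ j))
    ∧ (∀ i j : ℕ, 0 < i → i < m →
        ka * (kb ^ i * ka ^ j) = kb ^ (m - i) * ka ^ (j + 1) * kb ^ ((m : ℤ) * (-1) ^ j)) :=
  klein_coset_representatives_general m n hm hodd
end

section
/- Let p(z) ∈ ℂ[z, z^{−1}] be a Laurent polynomial such that p(iz) has real coefficients, with leading coefficient of argument λπ/2 (λ ∈ ℤ), whose only roots on the unit circle are i and −i with multiplicities m₊ and m₋ respectively, p pairs {iζ, i·conj(ζ)} of roots of modulus > 1 off the imaginary axis, r₊ roots on the positive imaginary axis of modulus > 1, and r₋ roots on the negative imaginary axis of modulus > 1 (all counted with multiplicity). Then, as n odd tends to infinity, Arg(∏_{z^n=1} p(z)) = ((λ + 2p + r₋ − r₊)n + (−1)^{(n−1)/2}(m₋ − m₊)/2)·(π/2) + o(1), the equality being in ℝ/2πℤ. -/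
/-!
For odd `n`, `∏_{ζ^n = 1} (ζ - μ) = 1 - μ^n`, so the product is
`(c i^λ)^n ∏_k (1 - μ_k^n)^{m_k}` and its phase is `i^{λn} ∏_k phase(1 - μ_k^n)^{m_k}`.
As `n → ∞`, `phase(1 - μ^n) → 1` when `|μ| < 1` and `phase(1 - μ^n) = phase(-μ)^n (1 + o(1))`
when `|μ| > 1`, while for `μ = ±i` it is exactly `exp(∓(-1)^{(n-1)/2} iπ/4)`. The symmetry
`μ ↦ -conj μ` of the roots pairs each root in the left half-plane with one in the right
half-plane, and such a pair contributes `phase(-μ) phase(conj μ) = -1 = i^2`; a root `it` with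
`|t| > 1` contributes `∓i`.
-/

open scoped Classical

open Complex Polynomial Filter Topology ComplexConjugate
open scoped Real

/-- Unlike `exp (arg w * I)`, this is `0` at `w = 0`. -/
noncomputable def phase : ℂ →*₀ ℂ where
  toFun w := w / ‖w‖
  map_zero' := by simp
  map_one' := by simp
  map_mul' a b := by simp [div_mul_div_comm]

lemma phase_apply (w : ℂ) : phase w = w / ‖w‖ := rfl

lemma exp_arg_mul_I_eq_phase {w : ℂ} (hw : w ≠ 0) : exp (arg w * I) = phase w := by
  rw [phase_apply, eq_div_iff (by simpa using hw), mul_comm]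
  exact norm_mul_exp_arg_mul_I w

lemma phase_ofReal_of_pos {r : ℝ} (hr : 0 < r) : phase r = 1 := by
  simp [phase_apply, abs_of_pos hr, hr.ne']

lemma phase_of_norm_eq_one {w : ℂ} (hw : ‖w‖ = 1) : phase w = w := by
  simp [phase_apply, hw]

lemma phase_neg_mul_phase_conj {z : ℂ} (hz : z ≠ 0) : phase (-z) * phase (conj z) = -1 := by
  rw [← map_mul, neg_mul, mul_conj, neg_eq_neg_one_mul, map_mul,
    phase_ofReal_of_pos (normSq_pos.mpr hz), phase_of_norm_eq_one (by simp), mul_one]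

lemma phase_ofReal_mul_I {t : ℝ} (ht : 0 < t) : phase (t * I) = I := by
  rw [map_mul, phase_ofReal_of_pos ht, phase_of_norm_eq_one (by simp), one_mul]

lemma phase_neg_ofReal_mul_I_of_pos {t : ℝ} (ht : 0 < t) : phase (-(t * I)) = -I := by
  rw [neg_eq_neg_one_mul, map_mul, phase_ofReal_mul_I ht, phase_of_norm_eq_one (by simp),
    neg_one_mul]

lemma phase_neg_ofReal_mul_I_of_neg {t : ℝ} (ht : t < 0) : phase (-(t * I)) = I := by
  rw [← neg_mul, ← ofReal_neg, phase_ofReal_mul_I (neg_pos.mpr ht)]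

lemma I_pow_of_odd {n : ℕ} (hn : Odd n) : I ^ n = ((-1 : ℝ) ^ ((n - 1) / 2) : ℝ) * I := by
  obtain ⟨j, rfl⟩ := hn
  rw [show (2 * j + 1 - 1) / 2 = j by omega, pow_succ, pow_mul, I_sq]
  push_cast
  ring

lemma one_sub_pow_ne_zero {n : ℕ} (hn : Odd n) {μ : ℂ} (hμ : ‖μ‖ = 1 → μ = I ∨ μ = -I) :
    1 - μ ^ n ≠ 0 := by
  intro h
  have hμn : μ ^ n = 1 := (sub_eq_zero.mp h).symm
  have hnorm : ‖μ‖ = 1 := by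
    simpa [norm_pow, pow_eq_one_iff_of_nonneg (norm_nonneg μ) hn.pos.ne'] using congrArg norm hμn
  have hre := congrArg re hμn
  rcases hμ hnorm with rfl | rfl
  · rw [I_pow_of_odd hn, re_ofReal_mul, I_re, mul_zero, one_re] at hre
    exact zero_ne_one hre
  · rw [hn.neg_pow, I_pow_of_odd hn, neg_re, re_ofReal_mul, I_re, mul_zero, neg_zero,
      one_re] at hre
    exact zero_ne_one hre

lemma one_add_mul_I_eq {ε : ℝ} (hε : ε = 1 ∨ ε = -1) :
    1 + ε * I = (√2 : ℝ) * exp ((ε * (π / 4) : ℝ) * I) := by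
  have h2 : ((√2 : ℝ) : ℂ) ^ 2 = 2 := by exact_mod_cast Real.sq_sqrt zero_le_two
  rw [exp_mul_I, ← ofReal_cos, ← ofReal_sin]
  rcases hε with rfl | rfl
  · simp only [one_mul, Real.cos_pi_div_four, Real.sin_pi_div_four]
    push_cast
    linear_combination (-(1 + I) / 2) * h2
  · simp only [neg_one_mul, Real.cos_neg, Real.sin_neg, Real.cos_pi_div_four,
      Real.sin_pi_div_four]
    push_cast
    linear_combination (-(1 - I) / 2) * h2

lemma phase_one_add_mul_I {ε : ℝ} (hε : ε = 1 ∨ ε = -1) :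
    phase (1 + ε * I) = exp ((ε * (π / 4) : ℝ) * I) := by
  rw [one_add_mul_I_eq hε, map_mul, phase_ofReal_of_pos (by positivity), one_mul,
    phase_of_norm_eq_one (norm_exp_ofReal_mul_I _)]

lemma phase_one_sub_I_pow {n : ℕ} (hn : Odd n) :
    phase (1 - I ^ n) = exp ((-((-1 : ℝ) ^ ((n - 1) / 2) * (π / 4)) : ℝ) * I) := by
  rw [I_pow_of_odd hn, sub_eq_add_neg, ← neg_mul, ← ofReal_neg, phase_one_add_mul_I, neg_mul]
  rcases neg_one_pow_eq_or ℝ ((n - 1) / 2) with h | h <;> simp [h]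

lemma phase_one_sub_neg_I_pow {n : ℕ} (hn : Odd n) :
    phase (1 - (-I) ^ n) = exp (((-1 : ℝ) ^ ((n - 1) / 2) * (π / 4) : ℝ) * I) := by
  rw [hn.neg_pow, I_pow_of_odd hn, sub_neg_eq_add, phase_one_add_mul_I (neg_one_pow_eq_or ℝ _)]

lemma exp_angle_mul_I_eq_I_zpow_mul {n : ℕ} (hn : Odd n) (a : ℤ) (mp mm : ℕ) :
    exp ((((a * n : ℤ) : ℝ) + (-1 : ℝ) ^ ((n - 1) / 2) * ((mm : ℝ) - (mp : ℝ)) / 2)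
        * (π / 2) * I)
      = I ^ (a * n) * phase (1 - I ^ n) ^ mp * phase (1 - (-I) ^ n) ^ mm := by
  have hI : I ^ (a * n) = exp ((a * n : ℤ) * (π / 2 * I)) := by
    rw [exp_int_mul, exp_pi_div_two_mul_I]
  rw [hI, phase_one_sub_I_pow hn, phase_one_sub_neg_I_pow hn, ← exp_nat_mul, ← exp_nat_mul,
    ← exp_add, ← exp_add]
  congr 1
  push_cast
  ring

lemma tendsto_phase_one_sub_pow {w : ℂ} (hw : ‖w‖ < 1) :
    Tendsto (fun n : ℕ => phase (1 - w ^ n)) atTop (𝓝 1) := by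
  have h : Tendsto (fun n : ℕ => 1 - w ^ n) atTop (𝓝 1) := by
    simpa using tendsto_const_nhds.sub (tendsto_pow_atTop_nhds_zero_of_norm_lt_one hw)
  have := h.div ((continuous_ofReal.tendsto _).comp h.norm) (by simp)
  simpa only [phase_apply, norm_one, ofReal_one, div_one, Function.comp_def, Pi.div_def] using this

lemma phase_one_sub_pow_of_one_lt_norm {n : ℕ} (hn : Odd n) {μ : ℂ} (hμ : 1 < ‖μ‖) :
    phase (1 - μ ^ n) = phase (-μ) ^ n * phase (1 - μ⁻¹ ^ n) := by
  have hμ0 : μ ≠ 0 := norm_pos_iff.mp (one_pos.trans hμ)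
  rw [← map_pow, ← map_mul, hn.neg_pow, inv_pow, neg_mul, mul_sub, mul_one,
    mul_inv_cancel₀ (pow_ne_zero n hμ0), neg_sub]

noncomputable def asymptoticPhase (μ : ℂ) (n : ℕ) : ℂ :=
  if 1 < ‖μ‖ then phase (-μ) ^ n else if ‖μ‖ < 1 then 1 else phase (1 - μ ^ n)

lemma exists_phase_one_sub_pow_eq_asymptoticPhase_mul (μ : ℂ) :
    ∃ E : ℕ → ℂ, Tendsto E atTop (𝓝 1) ∧
      ∀ n, Odd n → phase (1 - μ ^ n) = asymptoticPhase μ n * E n := by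
  unfold asymptoticPhase
  rcases lt_trichotomy ‖μ‖ 1 with h | h | h
  · exact ⟨_, tendsto_phase_one_sub_pow h, fun n _ => by simp [h, h.not_gt]⟩
  · exact ⟨1, tendsto_const_nhds, fun n _ => by simp [h]⟩
  · refine ⟨_, tendsto_phase_one_sub_pow (by rwa [norm_inv, inv_lt_one₀ (one_pos.trans h)]),
      fun n hn => ?_⟩
    rw [if_pos h, phase_one_sub_pow_of_one_lt_norm hn h]

lemma asymptoticPhase_eq_mul_ite {μ : ℂ} (hμ : ‖μ‖ = 1 → μ = I ∨ μ = -I) (n : ℕ) :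
    asymptoticPhase μ n = (if 1 < ‖μ‖ then phase (-μ) else 1) ^ n
      * (if μ = I then phase (1 - I ^ n) else 1)
      * (if μ = -I then phase (1 - (-I) ^ n) else 1) := by
  have hI : ‖I‖ = 1 := norm_I
  have hnegI : ‖-I‖ = 1 := by simp
  have hIneg : I ≠ -I := fun h => by norm_num [Complex.ext_iff] at h
  unfold asymptoticPhase
  rcases lt_trichotomy ‖μ‖ 1 with h | h | h
  · have h1 : μ ≠ I := by rintro rfl; linarith
    have h2 : μ ≠ -I := by rintro rfl; linarith
    simp [h, h.not_gt, h1, h2]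
  · rcases hμ h with rfl | rfl
    · simp [hIneg]
    · simp [hIneg.symm]
  · have h1 : μ ≠ I := by rintro rfl; linarith
    have h2 : μ ≠ -I := by rintro rfl; linarith
    simp [h, h1, h2]

section NthRoots

variable {K : Type*} [Field K] [IsAlgClosed K]

lemma card_nthRoots_one (n : ℕ) : Multiset.card (nthRoots n (1 : K)) = n := by
  rw [nthRoots, ← (IsAlgClosed.splits _).natDegree_eq_card_roots, natDegree_X_pow_sub_C]

lemma prod_nthRoots_one_sub {n : ℕ} (hn : n ≠ 0) (x : K) :
    ((nthRoots n (1 : K)).map (fun ζ => x - ζ)).prod = x ^ n - 1 := by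
  simpa [nthRoots] using ((IsAlgClosed.splits (X ^ n - C (1 : K))).eval_eq_prod_roots_of_monic
    (monic_X_pow_sub_C 1 hn) x).symm

lemma prod_nthRoots_one_sub_of_odd {n : ℕ} (hn : Odd n) (x : K) :
    ((nthRoots n (1 : K)).map (fun ζ => ζ - x)).prod = 1 - x ^ n := by
  have hneg : (nthRoots n (1 : K)).map (fun ζ => ζ - x)
      = ((nthRoots n (1 : K)).map (fun ζ => x - ζ)).map Neg.neg := by
    simp [Multiset.map_map]
  rw [hneg, Multiset.prod_map_neg, Multiset.card_map, card_nthRoots_one,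
    prod_nthRoots_one_sub hn.pos.ne', hn.neg_one_pow]
  ring

lemma prod_nthRoots_one_of_odd {n : ℕ} (hn : Odd n) : (nthRoots n (1 : K)).prod = 1 := by
  simpa [zero_pow hn.pos.ne'] using prod_nthRoots_one_sub_of_odd hn (0 : K)

lemma prod_nthRoots_one_mul_zpow_mul_prod {ι : Type*} [Fintype ι] {n : ℕ} (hn : Odd n)
    (a : K) (d : ℤ) (μ : ι → K) (m : ι → ℕ) :
    ((nthRoots n (1 : K)).map (fun z => a * z ^ d * ∏ k, (z - μ k) ^ m k)).prod
      = a ^ n * ∏ k, (1 - μ k ^ n) ^ m k := by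
  simp only [Multiset.prod_map_mul, Multiset.map_const', Multiset.prod_replicate,
    card_nthRoots_one, Multiset.prod_map_zpow, Multiset.map_id', prod_nthRoots_one_of_odd hn,
    one_zpow, mul_one, Finset.prod_eq_multiset_prod]
  rw [Multiset.prod_map_prod_map]
  simp only [Multiset.prod_map_pow, prod_nthRoots_one_sub_of_odd hn]

end NthRoots

lemma prod_pow_eq_multiset_prod {ι α M : Type*} [Fintype ι] [CommMonoid M] (μ : ι → α)
    (m : ι → ℕ) (G : α → M) :
    ∏ k, G (μ k) ^ m k = ((∑ k, m k • ({μ k} : Multiset α)).map G).prod := by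
  rw [← Multiset.coe_mapAddMonoidHom, map_sum, Multiset.prod_sum]
  simp [Multiset.map_nsmul, Multiset.prod_nsmul]

lemma prod_pow_comp_involutive {ι α M : Type*} [Fintype ι] [DecidableEq α] [CommMonoid M]
    {σ : α → α} (hσ : Function.Involutive σ) {μ : ι → α} {m : ι → ℕ}
    (hsym : ∀ z, ∑ k ∈ Finset.univ.filter (fun k => μ k = z), m k
      = ∑ k ∈ Finset.univ.filter (fun k => μ k = σ z), m k) (G : α → M) :
    ∏ k, G (σ (μ k)) ^ m k = ∏ k, G (μ k) ^ m k := by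
  set R : Multiset α := ∑ k, m k • {μ k}
  have hcount : ∀ z, R.count z = ∑ k ∈ Finset.univ.filter (fun k => μ k = z), m k := by
    intro z
    simp [R, Multiset.count_sum', Multiset.count_singleton, Finset.sum_filter, eq_comm]
  have hR : R.map σ = R := by
    ext z
    rw [← hσ z, Multiset.count_map_eq_count' σ R hσ.injective, hcount, hcount, hsym, hσ]
  calc ∏ k, G (σ (μ k)) ^ m k = ((R.map σ).map G).prod := by
        rw [Multiset.map_map]; exact prod_pow_eq_multiset_prod μ m (G ∘ σ)
    _ = ∏ k, G (μ k) ^ m k := by rw [hR]; exact (prod_pow_eq_multiset_prod μ m G).symm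

lemma prod_ite_pow_eq_pow_sum {ι M : Type*} [CommMonoid M] (s : Finset ι) (p : ι → Prop)
    [DecidablePred p] (m : ι → ℕ) (c : M) :
    ∏ k ∈ s, (if p k then c else 1) ^ m k = c ^ ∑ k ∈ s with p k, m k := by
  rw [← Finset.prod_pow_eq_pow_sum, Finset.prod_filter]
  simp [ite_pow]

lemma ite_phase_neg_eq_mul_ite (z : ℂ) :
    (if 1 < ‖z‖ then phase (-z) else 1)
      = (if 1 < ‖z‖ ∧ 0 < z.re then phase (-z) else 1)
        * (if 1 < ‖z‖ ∧ z.re < 0 then phase (-z) else 1)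
        * (if z.re = 0 ∧ 1 < z.im then -I else 1)
        * (if z.re = 0 ∧ z.im < -1 then I else 1) := by
  rcases lt_trichotomy z.re 0 with hre | hre | hre
  · simp [hre, hre.ne, hre.not_gt]
  · obtain ⟨t, rfl⟩ : ∃ t : ℝ, z = t * I := ⟨z.im, by apply Complex.ext <;> simp [hre]⟩
    simp only [norm_mul, norm_real, norm_I, mul_one, Real.norm_eq_abs, mul_re, mul_im, ofReal_re,
      ofReal_im, I_re, I_im, mul_zero, sub_zero, add_zero, lt_self_iff_false, and_false, if_false,
      true_and, one_mul]
    rcases lt_trichotomy t 0 with ht | rfl | ht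
    · rw [abs_of_neg ht, phase_neg_ofReal_mul_I_of_neg ht, if_neg (show ¬ 1 < t by linarith),
        one_mul]
      exact if_congr ⟨fun _ => by linarith, fun _ => by linarith⟩ rfl rfl
    · norm_num
    · rw [abs_of_pos ht, phase_neg_ofReal_mul_I_of_pos ht, if_neg (show ¬ t < -1 by linarith),
        mul_one]
  · simp [hre, hre.ne', hre.not_gt]

lemma prod_ite_phase_neg_pow {ι : Type*} [Fintype ι] {μ : ι → ℂ} {m : ι → ℕ}
    (hsym : ∀ z : ℂ, ∑ k ∈ Finset.univ.filter (fun k => μ k = z), m k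
      = ∑ k ∈ Finset.univ.filter (fun k => μ k = -conj z), m k)
    {P rplus rminus : ℕ}
    (hP : P = ∑ k ∈ Finset.univ.filter (fun k => 1 < ‖μ k‖ ∧ 0 < (μ k).re), m k)
    (hrplus : rplus = ∑ k ∈ Finset.univ.filter (fun k => (μ k).re = 0 ∧ 1 < (μ k).im), m k)
    (hrminus : rminus = ∑ k ∈ Finset.univ.filter (fun k => (μ k).re = 0 ∧ (μ k).im < -1), m k) :
    ∏ k, (if 1 < ‖μ k‖ then phase (-μ k) else 1) ^ m k
      = I ^ (2 * (P : ℤ) + rminus - rplus) := by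
  have hσ : Function.Involutive (fun z : ℂ => -conj z) := fun z => by simp
  have hleft : ∏ k, (if 1 < ‖μ k‖ ∧ (μ k).re < 0 then phase (-μ k) else 1) ^ m k
      = ∏ k, (if 1 < ‖μ k‖ ∧ 0 < (μ k).re then phase (conj (μ k)) else 1) ^ m k := by
    rw [← prod_pow_comp_involutive hσ hsym
      (fun z => if 1 < ‖z‖ ∧ z.re < 0 then phase (-z) else 1)]
    simp
  have hpair : (∏ k, (if 1 < ‖μ k‖ ∧ 0 < (μ k).re then phase (-μ k) else 1) ^ m k)
      * ∏ k, (if 1 < ‖μ k‖ ∧ 0 < (μ k).re then phase (conj (μ k)) else 1) ^ m k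
      = (-1) ^ P := by
    rw [← Finset.prod_mul_distrib, hP, ← prod_ite_pow_eq_pow_sum]
    refine Finset.prod_congr rfl fun k _ => ?_
    rw [← mul_pow]
    split_ifs with h
    · rw [phase_neg_mul_phase_conj (norm_pos_iff.mp (one_pos.trans h.1))]
    · rw [mul_one]
  simp only [ite_phase_neg_eq_mul_ite, mul_pow, Finset.prod_mul_distrib, hleft, hpair,
    prod_ite_pow_eq_pow_sum, ← hrplus, ← hrminus]
  rw [zpow_sub₀ I_ne_zero, zpow_add₀ I_ne_zero, zpow_mul, ← inv_I, inv_pow]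
  simp only [zpow_ofNat, I_sq, zpow_natCast, div_eq_mul_inv]
  ring

lemma prod_asymptoticPhase_pow {ι : Type*} [Fintype ι] {μ : ι → ℂ} {m : ι → ℕ}
    (hcirc : ∀ k, ‖μ k‖ = 1 → μ k = I ∨ μ k = -I) {mplus mminus : ℕ}
    (hmplus : mplus = ∑ k ∈ Finset.univ.filter (fun k => μ k = I), m k)
    (hmminus : mminus = ∑ k ∈ Finset.univ.filter (fun k => μ k = -I), m k) (n : ℕ) :
    ∏ k, asymptoticPhase (μ k) n ^ m k
      = (∏ k, (if 1 < ‖μ k‖ then phase (-μ k) else 1) ^ m k) ^ n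
        * phase (1 - I ^ n) ^ mplus * phase (1 - (-I) ^ n) ^ mminus := by
  simp only [asymptoticPhase_eq_mul_ite (hcirc _), mul_pow, Finset.prod_mul_distrib,
    prod_ite_pow_eq_pow_sum, ← hmplus, ← hmminus, ← Finset.prod_pow, ← pow_mul, mul_comm n]

lemma norm_sub_eq_norm_sub_one_of_eq_mul {a b d : ℂ} (hb : ‖b‖ = 1) (h : a = b * d) :
    ‖a - b‖ = ‖d - 1‖ := by
  rw [h, ← mul_sub_one, norm_mul, hb, one_mul]

/-- Let `p(z) = c·i^λ·z^d·∏_k (z − μ_k)^{m_k}` (`c > 0`) be a Laurent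
polynomial such that `p(iz)` has real coefficients (encoded by the root symmetry `hsym`),
whose only roots on the unit circle are `±i` (multiplicities `mplus, mminus`), with `P` pairs
`{iζ, i·conj ζ}` of roots of modulus `> 1` off the imaginary axis, and `rplus` (resp. `rminus`)
roots on the positive (resp. negative) imaginary axis of modulus `> 1`.  Then, as `n` odd
tends to infinity,
`Arg(∏_{z^n=1} p(z)) = ((λ + 2P + rminus − rplus)n + (−1)^{(n−1)/2}(mminus − mplus)/2)·(π/2) + o(1)`
in `ℝ/2πℤ` (expressed via convergence of the corresponding points on the unit circle). -/
theorem arg_product_over_roots_of_unity_asymptotics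
    {ι : Type} [Fintype ι] (c : ℝ) (hc : 0 < c) (d lam : ℤ) (μ : ι → ℂ) (m : ι → ℕ)
    (hcirc : ∀ k, ‖μ k‖ = 1 → μ k = Complex.I ∨ μ k = -Complex.I)
    (hsym : ∀ z : ℂ,
      (∑ k ∈ Finset.univ.filter (fun k => μ k = z), m k)
        = ∑ k ∈ Finset.univ.filter (fun k => μ k = -((starRingEnd ℂ) z)), m k)
    (P rplus rminus mplus mminus : ℕ)
    (hP : P = ∑ k ∈ Finset.univ.filter (fun k => 1 < ‖μ k‖ ∧ 0 < (μ k).re), m k)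
    (hrplus : rplus = ∑ k ∈ Finset.univ.filter (fun k => (μ k).re = 0 ∧ 1 < (μ k).im), m k)
    (hrminus : rminus = ∑ k ∈ Finset.univ.filter (fun k => (μ k).re = 0 ∧ (μ k).im < -1), m k)
    (hmplus : mplus = ∑ k ∈ Finset.univ.filter (fun k => μ k = Complex.I), m k)
    (hmminus : mminus = ∑ k ∈ Finset.univ.filter (fun k => μ k = -Complex.I), m k) :
    Filter.Tendsto
      (fun n : ℕ =>
        norm
          (Complex.exp
              ((Complex.arg (((Polynomial.nthRoots n (1 : ℂ)).map
                  (fun z => (c : ℂ) * Complex.I ^ lam * z ^ d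
                    * ∏ k : ι, (z - μ k) ^ (m k))).prod) : ℂ) * Complex.I)
            - Complex.exp
              (((((lam + 2 * (P : ℤ) + (rminus : ℤ) - (rplus : ℤ)) * (n : ℤ) : ℤ) : ℝ)
                  + (-1 : ℝ) ^ ((n - 1) / 2) * ((mminus : ℝ) - (mplus : ℝ)) / 2)
                * (Real.pi / 2) * Complex.I)))
      (Filter.atTop ⊓ Filter.principal {n : ℕ | Odd n}) (nhds 0) := by
  choose E hE hphase using fun k => exists_phase_one_sub_pow_eq_asymptoticPhase_mul (μ k)
  have hD : Tendsto (fun n => ∏ k, E k n ^ m k) atTop (𝓝 1) := by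
    simpa using tendsto_finsetProd Finset.univ fun k _ => (hE k).pow (m k)
  have hlim : Tendsto (fun n => ‖∏ k, E k n ^ m k - 1‖) (atTop ⊓ 𝓟 {n | Odd n}) (𝓝 0) := by
    simpa using ((hD.sub_const 1).norm).mono_left inf_le_left
  refine hlim.congr' ?_
  filter_upwards [mem_inf_of_right (mem_principal_self _)] with n (hn : Odd n)
  have hprod := prod_nthRoots_one_mul_zpow_mul_prod hn ((c : ℂ) * I ^ lam) d μ m
  have hne : ((c : ℂ) * I ^ lam) ^ n * ∏ k, (1 - μ k ^ n) ^ m k ≠ 0 :=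
    mul_ne_zero (pow_ne_zero _ (mul_ne_zero (by exact_mod_cast hc.ne') (zpow_ne_zero _ I_ne_zero)))
      (Finset.prod_ne_zero_iff.mpr fun k _ => pow_ne_zero _ (one_sub_pow_ne_zero hn (hcirc k)))
  refine (norm_sub_eq_norm_sub_one_of_eq_mul
    (by norm_cast; exact norm_exp_ofReal_mul_I _) ?_).symm
  rw [hprod, exp_arg_mul_I_eq_phase hne, exp_angle_mul_I_eq_I_zpow_mul hn, map_mul, map_pow,
    map_mul, phase_ofReal_of_pos hc, one_mul, phase_of_norm_eq_one (by simp), map_prod]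
  simp only [map_pow, hphase _ n hn, mul_pow, Finset.prod_mul_distrib,
    prod_asymptoticPhase_pow hcirc hmplus hmminus, prod_ite_phase_neg_pow hsym hP hrplus hrminus]
  rw [← zpow_natCast, ← zpow_mul, ← zpow_natCast (_ ^ _), ← zpow_mul,
    show (lam + 2 * P + rminus - rplus) * (n : ℤ) = lam * n + (2 * P + rminus - rplus) * n by
      ring,
    zpow_add₀ I_ne_zero]
  ring
end

section
/- For the weighted hexagonal lattice fundamental domain with bipartite characteristic polynomial Q(z,w) = ν₁² + ν₃² + ν₁ν₃(w + w^{−1}) + ν₂²z (ν₁, ν₂, ν₃ > 0): Q has no zeros on the unit torus S¹ × S¹ if and only if ν₁ + ν₃ < ν₂ or ν₂ < |ν₁ − ν₃|; and if |ν₁ − ν₃| < ν₂ < ν₁ + ν₃, then the zeros of Q on the unit torus are exactly the two points (−1, w₀) and (−1, conj(w₀)) where w₀ ∈ S¹ satisfies ν₁² + ν₃² + ν₁ν₃(w₀ + w₀^{−1}) = ν₂². -/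
/-!
For `‖w‖ = 1` we have `w + w⁻¹ = 2 Re w`, so `ν₁² + ν₃² + ν₁ν₃(w + w⁻¹) = ν₁² + ν₃² + 2ν₁ν₃ Re w`
is a real number, at least `(ν₁ - ν₃)² ≥ 0`. Hence `Q(z, w) = 0` with `‖z‖ = 1` forces `z = -1` and
`ν₁² + ν₃² + 2ν₁ν₃ Re w = ν₂²`: by the law of cosines this is solvable with `Re w ∈ [-1, 1]` exactly
when `|ν₁ - ν₃| ≤ ν₂ ≤ ν₁ + ν₃`, and then `Re w` is determined, which leaves `w₀` and `conj w₀`.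
-/

open ComplexConjugate

namespace Complex

lemma add_inv_of_norm_eq_one {w : ℂ} (hw : ‖w‖ = 1) : w + w⁻¹ = (2 * w.re : ℝ) := by
  rw [inv_eq_conj hw, add_conj]

lemma exists_norm_eq_one_re_eq {r : ℝ} (hr : |r| ≤ 1) : ∃ w : ℂ, ‖w‖ = 1 ∧ w.re = r := by
  have hr2 : r ^ 2 ≤ 1 := by nlinarith [abs_nonneg r, sq_abs r]
  refine ⟨⟨r, √(1 - r ^ 2)⟩, ?_, rfl⟩
  rw [norm_def, normSq_mk, ← sq, Real.mul_self_sqrt (by linarith)]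
  simp

lemma re_eq_iff_eq_or_eq_conj {w v : ℂ} (h : ‖w‖ = ‖v‖) : w.re = v.re ↔ w = v ∨ w = conj v := by
  refine ⟨fun hre => ?_, by rintro (rfl | rfl) <;> simp⟩
  have hsq : w.im * w.im = v.im * v.im := by
    have := congrArg (· ^ 2) h
    simp only [Complex.sq_norm, normSq_apply, hre] at this
    linarith
  rcases mul_self_eq_mul_self_iff.1 hsq with him | him
  · exact Or.inl (ext hre him)
  · exact Or.inr (ext hre (by simpa using him))

lemma ofReal_add_mul_eq_zero_iff {a b : ℝ} (ha : 0 ≤ a) (hb : 0 < b) {z : ℂ} (hz : ‖z‖ = 1) :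
    (a : ℂ) + b * z = 0 ↔ z = -1 ∧ a = b := by
  refine ⟨fun h => ?_, by rintro ⟨rfl, rfl⟩; ring⟩
  have hbz : (b : ℂ) * z = -a := by linear_combination h
  have hab : a = b := by
    simpa [hz, abs_of_nonneg ha, abs_of_pos hb] using (congrArg (‖·‖) hbz).symm
  subst hab
  exact ⟨mul_left_cancel₀ (ofReal_ne_zero.2 hb.ne') (by linear_combination hbz), rfl⟩

end Complex

open Complex

lemma exists_norm_eq_one_law_of_cosines_iff {a b c : ℝ} (ha : 0 < a) (hb : 0 < b) (hc : 0 ≤ c) :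
    (∃ w : ℂ, ‖w‖ = 1 ∧ a ^ 2 + b ^ 2 + 2 * a * b * w.re = c ^ 2) ↔ |a - b| ≤ c ∧ c ≤ a + b := by
  have hab : 0 < 2 * a * b := by positivity
  constructor
  · rintro ⟨w, hw, hcos⟩
    obtain ⟨hlo, hhi⟩ := abs_le.1 (hw ▸ abs_re_le_norm w)
    refine ⟨abs_le_of_sq_le_sq (by nlinarith) hc, ?_⟩
    exact (sq_le_sq₀ hc (by positivity)).1 (by nlinarith)
  · rintro ⟨hlo, hhi⟩
    have hlo' : (a - b) ^ 2 ≤ c ^ 2 := sq_le_sq' (neg_le_of_abs_le hlo) (le_of_abs_le hlo)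
    have hhi' : c ^ 2 ≤ (a + b) ^ 2 := pow_le_pow_left₀ hc hhi 2
    obtain ⟨w, hw, hre⟩ := exists_norm_eq_one_re_eq (r := (c ^ 2 - a ^ 2 - b ^ 2) / (2 * a * b)) <| by
      rw [abs_le, le_div_iff₀ hab, div_le_iff₀ hab]
      constructor <;> nlinarith
    refine ⟨w, hw, ?_⟩
    rw [hre]
    field_simp
    ring

lemma hexagonal_eq_zero_iff {ν₁ ν₂ ν₃ : ℝ} (hν : 0 ≤ ν₁ * ν₃) (h₂ : ν₂ ≠ 0) {z w : ℂ}
    (hz : ‖z‖ = 1) (hw : ‖w‖ = 1) :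
    (ν₁ : ℂ) ^ 2 + (ν₃ : ℂ) ^ 2 + (ν₁ : ℂ) * ν₃ * (w + w⁻¹) + (ν₂ : ℂ) ^ 2 * z = 0 ↔
      z = -1 ∧ ν₁ ^ 2 + ν₃ ^ 2 + 2 * ν₁ * ν₃ * w.re = ν₂ ^ 2 := by
  have hnonneg : 0 ≤ ν₁ ^ 2 + ν₃ ^ 2 + 2 * ν₁ * ν₃ * w.re := by
    obtain ⟨hlo, -⟩ := abs_le.1 (hw ▸ abs_re_le_norm w)
    nlinarith [sq_nonneg (ν₁ - ν₃)]
  rw [← ofReal_add_mul_eq_zero_iff hnonneg (by positivity) hz, add_inv_of_norm_eq_one hw]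
  push_cast
  ring_nf

lemma hexagonal_exists_zero_iff {ν₁ ν₂ ν₃ : ℝ} (h₁ : 0 < ν₁) (h₂ : 0 < ν₂) (h₃ : 0 < ν₃) :
    (∃ z w : ℂ, ‖z‖ = 1 ∧ ‖w‖ = 1 ∧
        (ν₁ : ℂ) ^ 2 + (ν₃ : ℂ) ^ 2 + (ν₁ : ℂ) * ν₃ * (w + w⁻¹) + (ν₂ : ℂ) ^ 2 * z = 0) ↔
      |ν₁ - ν₃| ≤ ν₂ ∧ ν₂ ≤ ν₁ + ν₃ := by
  have hν : 0 ≤ ν₁ * ν₃ := by positivity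
  rw [← exists_norm_eq_one_law_of_cosines_iff h₁ h₃ h₂.le]
  constructor
  · rintro ⟨z, w, hz, hw, hQ⟩
    exact ⟨w, hw, ((hexagonal_eq_zero_iff hν h₂.ne' hz hw).1 hQ).2⟩
  · rintro ⟨w, hw, hcos⟩
    exact ⟨-1, w, by simp, hw, (hexagonal_eq_zero_iff hν h₂.ne' (by simp) hw).2 ⟨rfl, hcos⟩⟩

/-- For the hexagonal-lattice bipartite characteristic polynomial
`Q(z,w) = ν₁² + ν₃² + ν₁ν₃(w + w⁻¹) + ν₂²z` with `ν₁, ν₂, ν₃ > 0`: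
`Q` has no zeros on the unit torus iff `ν₁ + ν₃ < ν₂` or `ν₂ < |ν₁ − ν₃|`; and if
`|ν₁ − ν₃| < ν₂ < ν₁ + ν₃`, then the zeros of `Q` on the unit torus are exactly the two
points `(−1, w₀)` and `(−1, conj w₀)` where `w₀ ∈ S¹` satisfies
`ν₁² + ν₃² + ν₁ν₃(w₀ + w₀⁻¹) = ν₂²`. -/
theorem hexagonal_spectral_curve_zeros (ν₁ ν₂ ν₃ : ℝ)
    (h₁ : 0 < ν₁) (h₂ : 0 < ν₂) (h₃ : 0 < ν₃) :
    ((∀ z w : ℂ, ‖z‖ = 1 → ‖w‖ = 1 →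
        (ν₁ : ℂ) ^ 2 + (ν₃ : ℂ) ^ 2 + (ν₁ : ℂ) * ν₃ * (w + w⁻¹) + (ν₂ : ℂ) ^ 2 * z ≠ 0)
      ↔ (ν₁ + ν₃ < ν₂ ∨ ν₂ < |ν₁ - ν₃|))
    ∧ (|ν₁ - ν₃| < ν₂ → ν₂ < ν₁ + ν₃ →
        ∃ w₀ : ℂ, ‖w₀‖ = 1 ∧
          (ν₁ : ℂ) ^ 2 + (ν₃ : ℂ) ^ 2 + (ν₁ : ℂ) * ν₃ * (w₀ + w₀⁻¹) = (ν₂ : ℂ) ^ 2 ∧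
          ∀ z w : ℂ, ‖z‖ = 1 → ‖w‖ = 1 →
            ((ν₁ : ℂ) ^ 2 + (ν₃ : ℂ) ^ 2 + (ν₁ : ℂ) * ν₃ * (w + w⁻¹) + (ν₂ : ℂ) ^ 2 * z = 0
              ↔ (z = -1 ∧ (w = w₀ ∨ w = (starRingEnd ℂ) w₀)))) := by
  refine ⟨?_, fun hlo hhi => ?_⟩
  · rw [← not_iff_not]
    push Not
    rw [hexagonal_exists_zero_iff h₁ h₂ h₃]
    exact and_comm
  · have hν : 0 ≤ ν₁ * ν₃ := by positivity
    obtain ⟨w₀, hw₀, hcos⟩ :=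
      (exists_norm_eq_one_law_of_cosines_iff h₁ h₃ h₂.le).2 ⟨hlo.le, hhi.le⟩
    refine ⟨w₀, hw₀, ?_, fun z w hz hw => ?_⟩
    · rw [add_inv_of_norm_eq_one hw₀]
      have hcos' := congrArg ((↑) : ℝ → ℂ) hcos
      push_cast at hcos' ⊢
      linear_combination hcos'
    · rw [hexagonal_eq_zero_iff hν h₂.ne' hz hw, ← re_eq_iff_eq_or_eq_conj (hw.trans hw₀.symm),
        ← hcos, add_right_inj, mul_right_inj' (by positivity)]
end
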